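/- arXiv:2307.02195 — 4 statements merged into one kernel-verified Lean document; each statement's English description precedes it below -/
import Mathlib

section
/- Let Q ∈ 𝒬_n have at least two distinct entry values and be normalized so that maxD(Q) = 1, and let α > 0. If the rounded matrix ⌊αQ⌉ also has at least two distinct entry values, then its dynamic range satisfies DR(⌊αQ⌉) ≤ log₂(1 + α). -/
open scoped BigOperators

/-- Real-valued version of a binary vector. -/
def toR {n : ℕ} (x : Fin n → Bool) : Fin n → ℝ := fun i => if x i then 1 else 0

/-- QUBO energy f_Q(x) = xᵀQx (for upper-triangular Q this is Σ_{i≤j} Q i j * x i * x j). -/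
def energy {n : ℕ} (Q : Matrix (Fin n) (Fin n) ℝ) (x : Fin n → Bool) : ℝ :=
  ∑ i, ∑ j, Q i j * toR x i * toR x j

/-- Upper-triangular predicate: entries below the diagonal vanish. -/
def IsUpperTri {n : ℕ} (Q : Matrix (Fin n) (Fin n) ℝ) : Prop :=
  ∀ i j : Fin n, j < i → Q i j = 0

/-- S*(Q): the set of minimizing binary vectors. -/
def minimizers {n : ℕ} (Q : Matrix (Fin n) (Fin n) ℝ) : Set (Fin n → Bool) :=
  {x | ∀ y : Fin n → Bool, energy Q x ≤ energy Q y}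

/-- Set of absolute differences between distinct elements of X. -/
def diffSet (X : Set ℝ) : Set ℝ := {d | ∃ x ∈ X, ∃ y ∈ X, x ≠ y ∧ d = |x - y|}

noncomputable def minD (X : Set ℝ) : ℝ := sInf (diffSet X)

noncomputable def maxD (X : Set ℝ) : ℝ := sSup (diffSet X)

/-- Dynamic range of a set of reals (in bits). -/
noncomputable def DR (X : Set ℝ) : ℝ := Real.logb 2 (maxD X / minD X)

/-- V(Q): the set of entry values of Q. -/
def entrySet {n : ℕ} (Q : Matrix (Fin n) (Fin n) ℝ) : Set ℝ := {v | ∃ i j : Fin n, Q i j = v}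

/-- Entrywise rounding to the nearest integer (ties rounded up). -/
noncomputable def roundM {n : ℕ} (A : Matrix (Fin n) (Fin n) ℝ) : Matrix (Fin n) (Fin n) ℝ :=
  fun i j => ((round (A i j) : ℤ) : ℝ)


lemma entrySet_finite {n : ℕ} (Q : Matrix (Fin n) (Fin n) ℝ) : (entrySet Q).Finite := by
  have : entrySet Q = Set.range (fun p : Fin n × Fin n => Q p.1 p.2) := by
    ext v; constructor
    · rintro ⟨i, j, h⟩; exact ⟨(i, j), h⟩
    · rintro ⟨⟨i, j⟩, h⟩; exact ⟨i, j, h⟩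
  rw [this]; exact Set.finite_range _

lemma diffSet_finite {X : Set ℝ} (hX : X.Finite) : (diffSet X).Finite := by
  have : diffSet X ⊆ (fun p : ℝ × ℝ => |p.1 - p.2|) '' (X ×ˢ X) := by
    rintro d ⟨x, hx, y, hy, _, rfl⟩
    exact ⟨(x, y), ⟨hx, hy⟩, rfl⟩
  exact ((hX.prod hX).image _).subset this

/-- If Q is normalized so that maxD(Q) = 1 and α > 0, then the dynamic range of
the rounded matrix ⌊αQ⌉ is at most log₂(1 + α). -/
theorem dr_of_rounded_le (n : ℕ) (hn : 1 ≤ n)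
    (Q : Matrix (Fin n) (Fin n) ℝ) (hQ : IsUpperTri Q)
    (hV : (entrySet Q).Nontrivial) (hnorm : maxD (entrySet Q) = 1)
    (α : ℝ) (hα : 0 < α)
    (hV' : (entrySet (roundM (α • Q))).Nontrivial) :
    DR (entrySet (roundM (α • Q))) ≤ Real.logb 2 (1 + α) := by
  set S := entrySet (roundM (α • Q)) with hS
  have hSfin : S.Finite := entrySet_finite _
  have hDfin : (diffSet S).Finite := diffSet_finite hSfin
  obtain ⟨a, ha, b, hb, hab⟩ := hV'
  have hDne : (diffSet S).Nonempty := ⟨|a - b|, a, ha, b, hb, hab, rfl⟩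
  -- all diffs are ≥ 1 (integer entries)
  have h1 : ∀ d ∈ diffSet S, (1 : ℝ) ≤ d := by
    rintro d ⟨x, hx, y, hy, hxy, rfl⟩
    obtain ⟨i, j, hij⟩ := hx
    obtain ⟨k, l, hkl⟩ := hy
    rw [← hij, ← hkl]
    have : roundM (α • Q) i j - roundM (α • Q) k l
        = ((round ((α • Q) i j) - round ((α • Q) k l) : ℤ) : ℝ) := by
      simp [roundM]
    rw [this, ← Int.cast_abs]
    have hne : round ((α • Q) i j) - round ((α • Q) k l) ≠ 0 := by
      intro h
      apply hxy
      rw [← hij, ← hkl]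
      have : round ((α • Q) i j) = round ((α • Q) k l) := by omega
      simp only [roundM]
      exact_mod_cast congrArg Int.cast this
    exact_mod_cast Int.one_le_abs hne
  have hmin : 1 ≤ minD S := le_csInf hDne h1
  -- Q's diffs are ≤ 1
  have hQd : ∀ i j k l : Fin n, |Q i j - Q k l| ≤ 1 := by
    intro i j k l
    by_cases h : Q i j = Q k l
    · simp [h]
    · have hmem : |Q i j - Q k l| ∈ diffSet (entrySet Q) :=
        ⟨Q i j, ⟨i, j, rfl⟩, Q k l, ⟨k, l, rfl⟩, h, rfl⟩
      have hbd : BddAbove (diffSet (entrySet Q)) :=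
        (diffSet_finite (entrySet_finite Q)).bddAbove
      calc |Q i j - Q k l| ≤ maxD (entrySet Q) := le_csSup hbd hmem
        _ = 1 := hnorm
  have hmax_ub : ∀ d ∈ diffSet S, d ≤ 1 + α := by
    rintro d ⟨x, hx, y, hy, hxy, rfl⟩
    obtain ⟨i, j, hij⟩ := hx
    obtain ⟨k, l, hkl⟩ := hy
    rw [← hij, ← hkl]
    have h1' : |roundM (α • Q) i j - (α • Q) i j| ≤ 1/2 := by
      simpa [roundM, abs_sub_comm] using abs_sub_round ((α • Q) i j)
    have h2' : |(α • Q) k l - roundM (α • Q) k l| ≤ 1/2 := by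
      simpa [roundM] using abs_sub_round ((α • Q) k l)
    have h3' : |(α • Q) i j - (α • Q) k l| ≤ α := by
      have : (α • Q) i j - (α • Q) k l = α * (Q i j - Q k l) := by
        simp [Matrix.smul_apply]; ring
      rw [this, abs_mul, abs_of_pos hα]
      calc α * |Q i j - Q k l| ≤ α * 1 := by
            exact mul_le_mul_of_nonneg_left (hQd i j k l) hα.le
        _ = α := mul_one α
    calc |roundM (α • Q) i j - roundM (α • Q) k l|
        = |(roundM (α • Q) i j - (α • Q) i j) + ((α • Q) i j - (α • Q) k l)
            + ((α • Q) k l - roundM (α • Q) k l)| := by ring_nf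
      _ ≤ |(roundM (α • Q) i j - (α • Q) i j) + ((α • Q) i j - (α • Q) k l)|
            + |(α • Q) k l - roundM (α • Q) k l| := abs_add_le _ _
      _ ≤ |roundM (α • Q) i j - (α • Q) i j| + |(α • Q) i j - (α • Q) k l|
            + |(α • Q) k l - roundM (α • Q) k l| := by
            have := abs_add_le (roundM (α • Q) i j - (α • Q) i j) ((α • Q) i j - (α • Q) k l)
            linarith
      _ ≤ 1/2 + α + 1/2 := by linarith
      _ = 1 + α := by ring
  have hmax : maxD S ≤ 1 + α := csSup_le hDne hmax_ub
  have hmax_ge : 1 ≤ maxD S := by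
    obtain ⟨d, hd⟩ := hDne
    calc (1:ℝ) ≤ d := h1 d hd
      _ ≤ maxD S := le_csSup hDfin.bddAbove hd
  have hminpos : (0:ℝ) < minD S := lt_of_lt_of_le one_pos hmin
  have hdivpos : 0 < maxD S / minD S := div_pos (lt_of_lt_of_le one_pos hmax_ge) hminpos
  have hdiv : maxD S / minD S ≤ 1 + α := by
    calc maxD S / minD S ≤ maxD S / 1 := by
          apply div_le_div_of_nonneg_left (by linarith) one_pos hmin
      _ = maxD S := div_one _
      _ ≤ 1 + α := hmax
  unfold DR
  exact Real.logb_le_logb_of_le (by norm_num) hdivpos hdiv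
end

section
/- Let Q ∈ 𝒬_n, fix k < l, and define y⁻ := min{0, min{ŷ_{00}, ŷ_{01}, ŷ_{10}} − y̌_{11}} and y⁺ := max{0, min{y̌_{00}, y̌_{01}, y̌_{10}} − ŷ_{11}}. Then for every w ∈ ℝ with y⁻ ≤ w ≤ y⁺, an optimum is preserved under the update Q_{kl} ↦ Q_{kl} + w: there exists x ∈ S*(Q) with x ∈ S*(Q + w·e_k e_lᵀ), i.e., S*(Q) ∩ S*(Q + w·e_k e_lᵀ) ≠ ∅. -/
/-! Adding `w` to `Q k l` changes `f_Q` only on the block `x k = x l = true`, where it adds `w`.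
Hence on the block `B_ab` the two energies have minima `y*_ab` and `y*_ab + [a = b = 1] w`, and a
minimizer within a block that is optimal for both families lies in `S*(Q) ∩ S*(Q + w e_k e_lᵀ)`.
For `w > 0` the block `11` is such a block, as `w ≤ y⁺` forces `y*_11 + w ≤ y*_ab` for the other
three; for `w < 0` the best of the other three is, as `y⁻ ≤ w` puts it at most `y*_11 + w`; for
`w = 0` any optimal block is. -/

open scoped BigOperators

/-- y*_{ab}: the minimum of f_Q over the subspace {x : x_k = a, x_l = b}. -/
noncomputable def subOpt {n : ℕ} (Q : Matrix (Fin n) (Fin n) ℝ) (k l : Fin n)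
    (a b : Bool) : ℝ :=
  sInf (energy Q '' {x : Fin n → Bool | x k = a ∧ x l = b})

lemma toR_mul_toR {n : ℕ} (x : Fin n → Bool) (k l : Fin n) :
    toR x k * toR x l = if (x k && x l) then 1 else 0 := by
  unfold toR
  cases x k <;> cases x l <;> simp

lemma energy_add_single {n : ℕ} (Q : Matrix (Fin n) (Fin n) ℝ) (k l : Fin n) (w : ℝ)
    (x : Fin n → Bool) :
    energy (Q + Matrix.single k l w) x = energy Q x + if (x k && x l) then w else 0 := by
  have hsingle : ∑ i, ∑ j, Matrix.single k l w i j * toR x i * toR x j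
      = w * (toR x k * toR x l) := by
    simp only [Matrix.single_apply, ite_mul, zero_mul, ite_and, Finset.sum_ite_irrel,
      Finset.sum_const_zero, Finset.sum_ite_eq, Finset.mem_univ, if_true]
    ring
  simp only [energy, Matrix.add_apply, add_mul, Finset.sum_add_distrib, hsingle, toR_mul_toR]
  split_ifs <;> simp

lemma subOpt_le_energy {n : ℕ} (Q : Matrix (Fin n) (Fin n) ℝ) (k l : Fin n)
    (x : Fin n → Bool) : subOpt Q k l (x k) (x l) ≤ energy Q x :=
  csInf_le (Set.toFinite _).bddBelow ⟨x, ⟨rfl, rfl⟩, rfl⟩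

lemma exists_energy_eq_subOpt {n : ℕ} (Q : Matrix (Fin n) (Fin n) ℝ) {k l : Fin n}
    (hkl : k ≠ l) (a b : Bool) :
    ∃ x : Fin n → Bool, x k = a ∧ x l = b ∧ energy Q x = subOpt Q k l a b := by
  classical
  have hne : (energy Q '' {x : Fin n → Bool | x k = a ∧ x l = b}).Nonempty :=
    ⟨_, Function.update (fun _ => a) l b, by simp [Function.update_of_ne hkl], rfl⟩
  obtain ⟨x, hx, hex⟩ := hne.csInf_mem (Set.toFinite _)
  exact ⟨x, hx.1, hx.2, hex⟩

lemma energy_add_le_of_subOpt_add_le {n : ℕ} (Q : Matrix (Fin n) (Fin n) ℝ) (k l : Fin n)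
    (p : Bool → Bool → ℝ) {x : Fin n → Bool} (hx : energy Q x = subOpt Q k l (x k) (x l))
    (hopt : ∀ a b, subOpt Q k l (x k) (x l) + p (x k) (x l) ≤ subOpt Q k l a b + p a b)
    (y : Fin n → Bool) : energy Q x + p (x k) (x l) ≤ energy Q y + p (y k) (y l) := by
  rw [hx]
  linarith [hopt (y k) (y l), subOpt_le_energy Q k l y]

lemma exists_and_eq_false_and_eq_min (c : Bool → Bool → ℝ) :
    ∃ a b, (a && b) = false ∧
      c a b = min (c false false) (min (c false true) (c true false)) := by
  rcases min_choice (c false true) (c true false) with h | h <;>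
    rcases min_choice (c false false) (min (c false true) (c true false)) with h' | h'
  exacts [⟨false, false, rfl, h'.symm⟩, ⟨false, true, rfl, (h'.trans h).symm⟩,
    ⟨false, false, rfl, h'.symm⟩, ⟨true, false, rfl, (h'.trans h).symm⟩]

lemma exists_common_argmin (c : Bool → Bool → ℝ) {w : ℝ}
    (hlo : min 0 (min (c false false) (min (c false true) (c true false)) - c true true) ≤ w)
    (hhi : w ≤ max 0 (min (c false false) (min (c false true) (c true false)) - c true true)) :
    ∃ a b, ∀ a' b', c a b ≤ c a' b' ∧
      c a b + (if (a && b) then w else 0) ≤ c a' b' + if (a' && b') then w else 0 := by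
  obtain ⟨a, b, hab, hcab⟩ := exists_and_eq_false_and_eq_min c
  set m := min (c false false) (min (c false true) (c true false))
  have hff : m ≤ c false false := min_le_left _ _
  have hft : m ≤ c false true := (min_le_right _ _).trans (min_le_left _ _)
  have htf : m ≤ c true false := (min_le_right _ _).trans (min_le_right _ _)
  rcases lt_trichotomy w 0 with hw | rfl | hw
  · have hm : m ≤ c true true + w := by
      linarith [min_le_iff.mp hlo |>.resolve_left (by linarith)]
    refine ⟨a, b, fun a' b' => ⟨?_, ?_⟩⟩ <;> cases a' <;> cases b' <;> simp [hab, hcab] <;>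
      linarith
  · obtain ⟨⟨a, b⟩, hab⟩ := Finite.exists_min (fun p : Bool × Bool => c p.1 p.2)
    exact ⟨a, b, fun a' b' => by simpa using hab (a', b')⟩
  · have hm : c true true + w ≤ m := by
      linarith [le_max_iff.mp hhi |>.resolve_left (by linarith)]
    refine ⟨true, true, fun a' b' => ⟨?_, ?_⟩⟩
    · cases a' <;> cases b' <;> linarith
    · cases a' <;> cases b' <;> simp <;> linarith

theorem update_preserves_optimum_general (n : ℕ)
    (Q : Matrix (Fin n) (Fin n) ℝ)
    (k l : Fin n) (hkl : k < l)
    (ylo yhi : Bool → Bool → ℝ)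
    (hbounds : ∀ a b : Bool, ylo a b ≤ subOpt Q k l a b ∧ subOpt Q k l a b ≤ yhi a b)
    (w : ℝ)
    (hw_lo : min 0 (min (yhi false false) (min (yhi false true) (yhi true false))
        - ylo true true) ≤ w)
    (hw_hi : w ≤ max 0 (min (ylo false false) (min (ylo false true) (ylo true false))
        - yhi true true)) :
    (minimizers Q ∩ minimizers (Q + Matrix.single k l w)).Nonempty := by
  set c := subOpt Q k l
  have hlo (a b : Bool) : ylo a b ≤ c a b := (hbounds a b).1
  have hhi (a b : Bool) : c a b ≤ yhi a b := (hbounds a b).2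
  obtain ⟨a, b, hab⟩ := exists_common_argmin c (w := w)
    (le_trans (by gcongr <;> apply_rules) hw_lo) (hw_hi.trans (by gcongr <;> apply_rules))
  obtain ⟨x, rfl, rfl, hx⟩ := exists_energy_eq_subOpt Q hkl.ne a b
  refine ⟨x, fun y => ?_, fun y => ?_⟩
  · simpa using energy_add_le_of_subOpt_add_le Q k l 0 hx
      (fun a b => by simpa using (hab a b).1) y
  · simpa only [energy_add_single] using energy_add_le_of_subOpt_add_le Q k l
      (fun a b => if (a && b) then w else 0) hx (fun a b => (hab a b).2) y

/-- Optimum preservation under a single off-diagonal parameter update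
Q_{kl} ↦ Q_{kl} + w, whenever y⁻ ≤ w ≤ y⁺ with
y⁻ = min{0, min{ŷ₀₀, ŷ₀₁, ŷ₁₀} − y̌₁₁} and y⁺ = max{0, min{y̌₀₀, y̌₀₁, y̌₁₀} − ŷ₁₁}. -/
theorem update_preserves_optimum (n : ℕ) (hn : 2 ≤ n)
    (Q : Matrix (Fin n) (Fin n) ℝ) (hQ : IsUpperTri Q)
    (k l : Fin n) (hkl : k < l)
    (ylo yhi : Bool → Bool → ℝ)
    (hbounds : ∀ a b : Bool, ylo a b ≤ subOpt Q k l a b ∧ subOpt Q k l a b ≤ yhi a b)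
    (w : ℝ)
    (hw_lo : min 0 (min (yhi false false) (min (yhi false true) (yhi true false))
        - ylo true true) ≤ w)
    (hw_hi : w ≤ max 0 (min (ylo false false) (min (ylo false true) (ylo true false))
        - yhi true true)) :
    (minimizers Q ∩ minimizers (Q + Matrix.single k l w)).Nonempty :=
  update_preserves_optimum_general n Q k l hkl ylo yhi hbounds w hw_lo hw_hi
end

section
/- Let Q ∈ 𝒬_n and fix k < l. If for some (a,b) ∈ {0,1}² the lower bound satisfies y̌_{ab} > min{ŷ_{a'b'} : (a',b') ∈ {0,1}², (a',b') ≠ (a,b)}, then no global minimizer of f_Q lies in B^n_{kl←ab}; that is, S*(Q) ∩ B^n_{kl←ab} = ∅. -/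
open scoped BigOperators

/-- If the lower bound y̌_{ab} exceeds the minimum of the upper bounds of the other
three subspaces, then no global minimizer of f_Q lies in B^n_{kl←ab}. -/
theorem lower_bound_excludes_subspace (n : ℕ) (hn : 2 ≤ n)
    (Q : Matrix (Fin n) (Fin n) ℝ) (hQ : IsUpperTri Q)
    (k l : Fin n) (hkl : k < l)
    (ylo yhi : Bool → Bool → ℝ)
    (hbounds : ∀ a b : Bool, ylo a b ≤ subOpt Q k l a b ∧ subOpt Q k l a b ≤ yhi a b)
    (a b : Bool)
    (hgt : sInf {v : ℝ | ∃ p : Bool × Bool, p ≠ (a, b) ∧ v = yhi p.1 p.2} < ylo a b) :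
    minimizers Q ∩ {x : Fin n → Bool | x k = a ∧ x l = b} = ∅ := by
  ext x
  simp only [Set.mem_inter_iff, Set.mem_empty_iff_false, iff_false, Set.mem_setOf_eq]
  rintro ⟨hmin, hk, hl⟩
  set T : Set ℝ := {v : ℝ | ∃ p : Bool × Bool, p ≠ (a, b) ∧ v = yhi p.1 p.2} with hT
  have hTfin : T.Finite := by
    have hsub : T ⊆ (fun p : Bool × Bool => yhi p.1 p.2) '' Set.univ := by
      rintro v ⟨p, _, rfl⟩; exact ⟨p, trivial, rfl⟩
    exact (Set.finite_univ.image _).subset hsub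
  have hTne : T.Nonempty := ⟨yhi (!a) b, ⟨(!a, b), by simp, rfl⟩⟩
  obtain ⟨p, hp, hpv⟩ := hTne.csInf_mem hTfin
  have hne : ∀ a' b' : Bool, ({x : Fin n → Bool | x k = a' ∧ x l = b'}).Nonempty := by
    intro a' b'
    refine ⟨Function.update (Function.update (fun _ => a') l b') k a', ?_, ?_⟩
    · simp
    · rw [Function.update_of_ne hkl.ne' _ _]
      simp
  have himg : ∃ y : Fin n → Bool, y k = p.1 ∧ y l = p.2 ∧
      energy Q y = subOpt Q k l p.1 p.2 := by
    have hfin : (energy Q '' {x : Fin n → Bool | x k = p.1 ∧ x l = p.2}).Finite :=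
      (Set.toFinite _).image _
    have hne' : (energy Q '' {x : Fin n → Bool | x k = p.1 ∧ x l = p.2}).Nonempty :=
      (hne p.1 p.2).image _
    obtain ⟨y, hy, hyv⟩ := hne'.csInf_mem hfin
    exact ⟨y, hy.1, hy.2, hyv⟩
  have hle : subOpt Q k l a b ≤ energy Q x := by
    have hfin : (energy Q '' {x : Fin n → Bool | x k = a ∧ x l = b}).Finite :=
      (Set.toFinite _).image _
    exact csInf_le hfin.bddBelow ⟨x, ⟨hk, hl⟩, rfl⟩
  obtain ⟨y, hyk, hyl, hyv⟩ := himg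
  have h1 : energy Q y ≤ yhi p.1 p.2 := hyv ▸ (hbounds p.1 p.2).2
  have h2 : ylo a b ≤ energy Q x := le_trans (hbounds a b).1 hle
  have h3 := hmin y
  rw [hpv] at hgt
  linarith
end

section
/- Let a ∈ ℝⁿ and T ∈ ℝ, and define Q ∈ 𝒬_n by Q_{ii} := a_i² − 2T·a_i for i ∈ [n] and Q_{ij} := 2·a_i·a_j for i < j. Then for every x ∈ {0,1}^n, f_Q(x) = (Σ_{i=1}^n a_i x_i − T)² − T². Consequently, if there exists x ∈ {0,1}^n with Σ_i a_i x_i = T, then S*(Q) = {x ∈ {0,1}^n : Σ_i a_i x_i = T}; i.e., this QUBO instance exactly encodes the SubsetSum problem with values a and target T. -/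
open scoped BigOperators

/-- The QUBO encoding of SubsetSum: with Q_{ii} = a_i² − 2T·a_i and Q_{ij} = 2a_i a_j
for i < j, one has f_Q(x) = (Σ_i a_i x_i − T)² − T²; hence if some binary x attains
Σ_i a_i x_i = T, then S*(Q) = {x : Σ_i a_i x_i = T}. -/
theorem subset_sum_qubo (n : ℕ) (hn : 1 ≤ n)
    (a : Fin n → ℝ) (T : ℝ) (Q : Matrix (Fin n) (Fin n) ℝ)
    (hQ : ∀ i j : Fin n,
      Q i j = if i = j then a i ^ 2 - 2 * T * a i else if i < j then 2 * a i * a j else 0) :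
    (∀ x : Fin n → Bool, energy Q x = (∑ i, a i * toR x i - T) ^ 2 - T ^ 2) ∧
    ((∃ x : Fin n → Bool, ∑ i, a i * toR x i = T) →
      minimizers Q = {x : Fin n → Bool | ∑ i, a i * toR x i = T}) := by
  have hE : ∀ x : Fin n → Bool, energy Q x = (∑ i, a i * toR x i - T) ^ 2 - T ^ 2 := by
    intro x
    set f : Fin n → ℝ := fun i => a i * toR x i with hf
    have hpt : ∀ i j : Fin n, Q i j * toR x i * toR x j =
        (if i = j then f i ^ 2 - 2 * T * f i else 0) + (if i < j then 2 * f i * f j else 0) := by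
      intro i j
      rw [hQ]
      rcases lt_trichotomy i j with h | h | h
      · simp only [h.ne, h, if_true, if_false, hf]
        ring
      · subst h
        simp only [lt_irrefl, if_true, if_false, hf]
        by_cases hxi : x i <;> simp [toR, hxi] <;> ring
      · simp [h.ne', not_lt_of_gt h]
    have hE1 : energy Q x = (∑ i, (f i ^ 2 - 2 * T * f i))
        + 2 * ∑ i, ∑ j, (if i < j then f i * f j else 0) := by
      unfold energy
      have hrow : ∀ i : Fin n, ∑ j, Q i j * toR x i * toR x j
          = (f i ^ 2 - 2 * T * f i) + 2 * ∑ j, (if i < j then f i * f j else 0) := by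
        intro i
        calc ∑ j, Q i j * toR x i * toR x j
            = ∑ j, ((if i = j then f i ^ 2 - 2 * T * f i else 0)
                + (if i < j then 2 * f i * f j else 0)) :=
              Finset.sum_congr rfl fun j _ => hpt i j
          _ = (∑ j, (if i = j then f i ^ 2 - 2 * T * f i else 0))
                + ∑ j, (if i < j then 2 * f i * f j else 0) := Finset.sum_add_distrib
          _ = (f i ^ 2 - 2 * T * f i) + 2 * ∑ j, (if i < j then f i * f j else 0) := by
              rw [Finset.mul_sum]
              congr 1
              · simp
              · exact Finset.sum_congr rfl fun j _ => by split_ifs <;> ring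
      rw [Finset.sum_congr rfl fun i _ => hrow i, Finset.sum_add_distrib, ← Finset.mul_sum]
    have hsq : (∑ i, f i) ^ 2 = ∑ i, f i ^ 2
        + 2 * ∑ i, ∑ j, (if i < j then f i * f j else 0) := by
      have hswap : ∑ i, ∑ j, (if (j : Fin n) < i then f i * f j else 0)
          = ∑ i, ∑ j, (if i < j then f i * f j else 0) := by
        rw [Finset.sum_comm]
        exact Finset.sum_congr rfl fun i _ => Finset.sum_congr rfl fun j _ => by
          rw [mul_comm]
      have h1 : (∑ i, f i) ^ 2 = ∑ i, ∑ j, f i * f j := by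
        rw [sq, Finset.sum_mul_sum]
      rw [h1]
      have h2 : ∀ i j : Fin n, f i * f j =
          (if i = j then f i * f j else 0) + (if i < j then f i * f j else 0)
          + (if j < i then f i * f j else 0) := by
        intro i j
        rcases lt_trichotomy i j with h | h | h
        · simp [h, h.ne, h.asymm]
        · simp [h]
        · simp [h, h.ne', h.asymm]
      calc ∑ i, ∑ j, f i * f j
          = ∑ i, ∑ j, ((if i = j then f i * f j else 0) + (if i < j then f i * f j else 0)
              + (if j < i then f i * f j else 0)) :=
            Finset.sum_congr rfl fun i _ => Finset.sum_congr rfl fun j _ => h2 i j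
        _ = ∑ i, ((∑ j, ((if i = j then f i * f j else 0) + (if i < j then f i * f j else 0)))
              + ∑ j, (if j < i then f i * f j else 0)) :=
            Finset.sum_congr rfl fun i _ => Finset.sum_add_distrib
        _ = ∑ i, ((∑ j, (if i = j then f i * f j else 0))
              + (∑ j, (if i < j then f i * f j else 0))
              + ∑ j, (if j < i then f i * f j else 0)) :=
            Finset.sum_congr rfl fun i _ => by rw [Finset.sum_add_distrib]
        _ = ∑ i, (f i ^ 2 + (∑ j, (if i < j then f i * f j else 0))
              + ∑ j, (if j < i then f i * f j else 0)) :=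
            Finset.sum_congr rfl fun i _ => by simp [sq]
        _ = ∑ i, f i ^ 2 + 2 * ∑ i, ∑ j, (if i < j then f i * f j else 0) := by
            rw [Finset.sum_add_distrib, Finset.sum_add_distrib, hswap]; ring
    have : energy Q x = (∑ i, f i) ^ 2 - 2 * T * ∑ i, f i := by
      rw [hE1, hsq, Finset.sum_sub_distrib, ← Finset.mul_sum]
      ring
    rw [this]
    ring
  refine ⟨hE, ?_⟩
  rintro ⟨x0, hx0⟩
  ext x
  simp only [minimizers, Set.mem_setOf_eq]
  constructor
  · intro hmin
    have h1 := hmin x0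
    rw [hE, hE, hx0] at h1
    have h2 : (∑ i, a i * toR x i - T) ^ 2 ≤ 0 := by linarith [sq_nonneg (∑ i, a i * toR x i - T)]
    have h3 : (∑ i, a i * toR x i - T) ^ 2 = 0 :=
      le_antisymm h2 (sq_nonneg _)
    have := pow_eq_zero_iff (n := 2) (by norm_num) |>.mp h3
    linarith
  · intro hx y
    rw [hE, hE, hx]
    have := sq_nonneg (∑ i, a i * toR y i - T)
    nlinarith
end
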